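/- Let φ ∈ L_{2S} and let p, q be processes with p ⊨ φ and q ⊨ φ. Then the following are equivalent: (1) p and q have a maximal lower bound g with respect to ≲_{2S} and g ⊨ φ; (2) there is a process r such that r ⊨ φ, r ≲_{2S} p, and r ≲_{2S} q. -/

import Mathlib

/-- Finite, loop-free CCS processes over the action set `Act`:
`p ::= 0 | a.p | p + p`. -/
inductive Proc (Act : Type) : Type
  | nil : Proc Act
  | pre : Act → Proc Act → Proc Act
  | plus : Proc Act → Proc Act → Proc Act

/-- The transition relation: `a.p —a→ p`, and `p₁ + p₂ —a→ p'` iff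
`p₁ —a→ p'` or `p₂ —a→ p'`. -/
inductive Step {Act : Type} : Proc Act → Act → Proc Act → Prop
  | pre (a : Act) (p : Proc Act) : Step (Proc.pre a p) a p
  | plusL : ∀ {p₁ p₂ p' : Proc Act} {a : Act},
      Step p₁ a p' → Step (Proc.plus p₁ p₂) a p'
  | plusR : ∀ {p₁ p₂ p' : Proc Act} {a : Act},
      Step p₂ a p' → Step (Proc.plus p₁ p₂) a p'

/-- HML formulas in negation normal form:
`φ ::= tt | ff | φ∧φ | φ∨φ | ⟨a⟩φ | [a]φ`. -/
inductive HML (Act : Type) : Type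
  | tt : HML Act
  | ff : HML Act
  | conj : HML Act → HML Act → HML Act
  | disj : HML Act → HML Act → HML Act
  | dia : Act → HML Act → HML Act
  | box : Act → HML Act → HML Act

/-- The satisfaction relation `p ⊨ φ`. -/
def Sat {Act : Type} : Proc Act → HML Act → Prop
  | _, HML.tt => True
  | _, HML.ff => False
  | p, HML.conj φ ψ => Sat p φ ∧ Sat p ψ
  | p, HML.disj φ ψ => Sat p φ ∨ Sat p ψ
  | p, HML.dia a φ => ∃ p', Step p a p' ∧ Sat p' φ
  | p, HML.box a φ => ∀ p', Step p a p' → Sat p' φ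

/-- `φ` entails `ψ` iff every process satisfying `φ` satisfies `ψ`. -/
def Entails {Act : Type} (φ ψ : HML Act) : Prop :=
  ∀ p : Proc Act, Sat p φ → Sat p ψ

/-- `R` is a simulation relation. -/
def IsSimulation {Act : Type} (R : Proc Act → Proc Act → Prop) : Prop :=
  ∀ p q, R p q → ∀ a p', Step p a p' → ∃ q', Step q a q' ∧ R p' q'

/-- The simulation preorder `≲_S`: the largest simulation. -/
def Sim {Act : Type} (p q : Proc Act) : Prop :=
  ∃ R, IsSimulation R ∧ R p q

/-- The set `I(p)` of initial actions of a process. -/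
def initials {Act : Type} (p : Proc Act) : Set Act :=
  {a | ∃ p', Step p a p'}

/-- Diamond-free HML formulas. -/
def DiaFree {Act : Type} : HML Act → Prop
  | HML.tt => True
  | HML.ff => True
  | HML.conj φ ψ => DiaFree φ ∧ DiaFree ψ
  | HML.disj φ ψ => DiaFree φ ∧ DiaFree ψ
  | HML.dia _ _ => False
  | HML.box _ φ => DiaFree φ

/-- The fragment `L_{2S}`: HML formulas in which no diamond modality occurs
within the scope of a box modality. -/
inductive InL2S {Act : Type} : HML Act → Prop
  | tt : InL2S HML.tt
  | ff : InL2S HML.ff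
  | conj : ∀ {φ ψ : HML Act}, InL2S φ → InL2S ψ → InL2S (HML.conj φ ψ)
  | disj : ∀ {φ ψ : HML Act}, InL2S φ → InL2S ψ → InL2S (HML.disj φ ψ)
  | dia : ∀ {a : Act} {φ : HML Act}, InL2S φ → InL2S (HML.dia a φ)
  | box : ∀ {a : Act} {φ : HML Act}, DiaFree φ → InL2S (HML.box a φ)

/-- `R` is a 2-nested simulation. -/
def Is2Sim {Act : Type} (R : Proc Act → Proc Act → Prop) : Prop :=
  ∀ p q, R p q →
    (∀ a p', Step p a p' → ∃ q', Step q a q' ∧ R p' q') ∧ Sim q p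

/-- The 2-nested simulation preorder `≲_{2S}`: the largest 2-nested simulation. -/
def Sim2 {Act : Type} (p q : Proc Act) : Prop :=
  ∃ R, Is2Sim R ∧ R p q

/-- `g` is a maximal lower bound of `p` and `q` w.r.t. the preorder `r`. -/
def MaxLowerBound {Act : Type} (r : Proc Act → Proc Act → Prop) (g p q : Proc Act) : Prop :=
  r g p ∧ r g q ∧ ∀ g' : Proc Act, r g' p → r g' q → r g' g

/-!
Formulas of `L_{2S}` are preserved upwards along `≲_{2S}`: a diamond is matched by the forward
simulation, and the diamond-free body of a box is preserved downwards along the reverse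
simulation `q ≲_S p` that `p ≲_{2S} q` carries. Hence if some common lower bound `r` of `p` and `q`
satisfies `φ`, so does every maximal lower bound `g`, since `r ≲_{2S} g`.

It remains to build a maximal lower bound whenever `p` and `q` have a common lower bound. Take the
sum of `a.g(p', q')` over all pairs `p —a→ p'`, `q —a→ q'` whose targets again have a common
lower bound, with `g(p', q')` built recursively. The recursion runs on a fuel parameter, which
suffices once it exceeds the depth of `p`, since transitions decrease depth.
-/

variable {Act : Type}

section Simulation

theorem Sim.exists_step {p q : Proc Act} (h : Sim p q) {a : Act} {p' : Proc Act}
    (hp : Step p a p') : ∃ q', Step q a q' ∧ Sim p' q' := by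
  obtain ⟨R, hR, hpq⟩ := h
  obtain ⟨q', hq, hpq'⟩ := hR p q hpq a p' hp
  exact ⟨q', hq, R, hR, hpq'⟩

theorem Sim.of_step {p q : Proc Act}
    (h : ∀ a p', Step p a p' → ∃ q', Step q a q' ∧ Sim p' q') : Sim p q := by
  refine ⟨fun x y => Sim x y ∨ (x = p ∧ y = q), ?_, Or.inr ⟨rfl, rfl⟩⟩
  rintro x y (hxy | ⟨rfl, rfl⟩) a x' hx
  · obtain ⟨y', hy, hxy'⟩ := hxy.exists_step hx
    exact ⟨y', hy, Or.inl hxy'⟩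
  · obtain ⟨y', hy, hxy'⟩ := h a x' hx
    exact ⟨y', hy, Or.inl hxy'⟩

theorem Sim.trans {p q r : Proc Act} (hpq : Sim p q) (hqr : Sim q r) : Sim p r := by
  refine ⟨fun x z => ∃ y, Sim x y ∧ Sim y z, ?_, q, hpq, hqr⟩
  rintro x z ⟨y, hxy, hyz⟩ a x' hx
  obtain ⟨y', hy, hxy'⟩ := hxy.exists_step hx
  obtain ⟨z', hz, hyz'⟩ := hyz.exists_step hy
  exact ⟨z', hz, y', hxy', hyz'⟩

theorem Sim2.exists_step {p q : Proc Act} (h : Sim2 p q) {a : Act} {p' : Proc Act}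
    (hp : Step p a p') : ∃ q', Step q a q' ∧ Sim2 p' q' := by
  obtain ⟨R, hR, hpq⟩ := h
  obtain ⟨q', hq, hpq'⟩ := (hR p q hpq).1 a p' hp
  exact ⟨q', hq, R, hR, hpq'⟩

theorem Sim2.sim_symm {p q : Proc Act} (h : Sim2 p q) : Sim q p := by
  obtain ⟨R, hR, hpq⟩ := h
  exact (hR p q hpq).2

theorem Sim2.sim {p q : Proc Act} (h : Sim2 p q) : Sim p q :=
  ⟨Sim2, fun _ _ hxy _ _ hx => hxy.exists_step hx, h⟩

theorem Sim2.of_step {p q : Proc Act}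
    (h : ∀ a p', Step p a p' → ∃ q', Step q a q' ∧ Sim2 p' q') (hqp : Sim q p) : Sim2 p q := by
  refine ⟨fun x y => Sim2 x y ∨ (x = p ∧ y = q), ?_, Or.inr ⟨rfl, rfl⟩⟩
  rintro x y (hxy | ⟨rfl, rfl⟩)
  · refine ⟨fun a x' hx => ?_, hxy.sim_symm⟩
    obtain ⟨y', hy, hxy'⟩ := hxy.exists_step hx
    exact ⟨y', hy, Or.inl hxy'⟩
  · refine ⟨fun a x' hx => ?_, hqp⟩
    obtain ⟨y', hy, hxy'⟩ := h a x' hx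
    exact ⟨y', hy, Or.inl hxy'⟩

end Simulation

section Preservation

theorem DiaFree.sat_of_sim {χ : HML Act} (hχ : DiaFree χ) {p q : Proc Act} (hpq : Sim p q)
    (hq : Sat q χ) : Sat p χ := by
  induction χ generalizing p q with
  | tt => trivial
  | ff => exact hq
  | conj φ ψ ihφ ihψ => exact ⟨ihφ hχ.1 hpq hq.1, ihψ hχ.2 hpq hq.2⟩
  | disj φ ψ ihφ ihψ => exact hq.imp (ihφ hχ.1 hpq) (ihψ hχ.2 hpq)
  | dia => exact hχ.elim
  | box a φ ih =>
    intro p' hp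
    obtain ⟨q', hq', hpq'⟩ := hpq.exists_step hp
    exact ih hχ hpq' (hq q' hq')

theorem InL2S.sat_of_sim2 {φ : HML Act} (hφ : InL2S φ) {p q : Proc Act} (hpq : Sim2 p q)
    (hp : Sat p φ) : Sat q φ := by
  induction hφ generalizing p q with
  | tt => trivial
  | ff => exact hp
  | conj _ _ ihφ ihψ => exact ⟨ihφ hpq hp.1, ihψ hpq hp.2⟩
  | disj _ _ ihφ ihψ => exact hp.imp (ihφ hpq) (ihψ hpq)
  | dia _ ih =>
    obtain ⟨p', hp', hsat⟩ := hp
    obtain ⟨q', hq', hpq'⟩ := hpq.exists_step hp'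
    exact ⟨q', hq', ih hpq' hsat⟩
  | box hχ =>
    intro q' hq'
    obtain ⟨p', hp', hqp'⟩ := hpq.sim_symm.exists_step hq'
    exact hχ.sat_of_sim hqp' (hp p' hp')

end Preservation

section Construction

theorem Proc.not_step_nil {a : Act} {p' : Proc Act} : ¬ Step .nil a p' := nofun

theorem Proc.step_pre_iff {a b : Act} {p p' : Proc Act} :
    Step (.pre a p) b p' ↔ b = a ∧ p' = p := by
  constructor
  · rintro ⟨⟩
    exact ⟨rfl, rfl⟩
  · rintro ⟨rfl, rfl⟩
    exact .pre _ _

theorem Proc.step_plus_iff {a : Act} {p₁ p₂ p' : Proc Act} :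
    Step (.plus p₁ p₂) a p' ↔ Step p₁ a p' ∨ Step p₂ a p' := by
  constructor
  · rintro (_ | ⟨h⟩ | ⟨h⟩)
    exacts [.inl h, .inr h]
  · rintro (h | h)
    exacts [.plusL h, .plusR h]

def Proc.depth : Proc Act → ℕ
  | .nil => 0
  | .pre _ p => p.depth + 1
  | .plus p q => max p.depth q.depth

theorem Step.depth_lt {p p' : Proc Act} {a : Act} (h : Step p a p') : p'.depth < p.depth := by
  induction h with
  | pre => exact Nat.lt_succ_self _
  | plusL _ ih => exact ih.trans_le (le_max_left _ _)
  | plusR _ ih => exact ih.trans_le (le_max_right _ _)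

def Proc.bind (k : Act → Proc Act → Proc Act) : Proc Act → Proc Act
  | .nil => .nil
  | .pre a p' => k a p'
  | .plus p₁ p₂ => .plus (p₁.bind k) (p₂.bind k)

theorem Proc.step_bind {k : Act → Proc Act → Proc Act} {p g : Proc Act} {c : Act} :
    Step (p.bind k) c g ↔ ∃ a p', Step p a p' ∧ Step (k a p') c g := by
  induction p with
  | nil => simp only [bind, not_step_nil, false_and, exists_false]
  | pre a p' => simp [bind, step_pre_iff]
  | plus p₁ p₂ ih₁ ih₂ =>
    simp only [bind, step_plus_iff, ih₁, ih₂, or_and_right, exists_or]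

def HasCommonLowerBound (p q : Proc Act) : Prop := ∃ r, Sim2 r p ∧ Sim2 r q

open Classical in
noncomputable def mlb : ℕ → Proc Act → Proc Act → Proc Act
  | 0, _, _ => .nil
  | n + 1, p, q => p.bind fun a p' => q.bind fun b q' =>
      if a = b ∧ HasCommonLowerBound p' q' then .pre a (mlb n p' q') else .nil

theorem step_mlb_succ {n : ℕ} {p q g : Proc Act} {c : Act} :
    Step (mlb (n + 1) p q) c g ↔
      ∃ p' q', Step p c p' ∧ Step q c q' ∧ HasCommonLowerBound p' q' ∧ g = mlb n p' q' := by
  simp only [mlb, Proc.step_bind]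
  constructor
  · rintro ⟨a, p', hp, b, q', hq, hstep⟩
    split_ifs at hstep with hcond
    · obtain ⟨rfl, rfl⟩ := Proc.step_pre_iff.mp hstep
      obtain ⟨rfl, hpq⟩ := hcond
      exact ⟨p', q', hp, hq, hpq, rfl⟩
    · exact (Proc.not_step_nil hstep).elim
  · rintro ⟨p', q', hp, hq, hpq, rfl⟩
    exact ⟨c, p', hp, c, q', hq, by rw [if_pos ⟨rfl, hpq⟩]; exact .pre _ _⟩

end Construction

section Maximality

variable {n : ℕ} {p q : Proc Act}

theorem sim2_mlb_succ_of_lowerBound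
    (ih : ∀ a p' q', Step p a p' → Step q a q' → HasCommonLowerBound p' q' →
      MaxLowerBound Sim2 (mlb n p' q') p' q')
    {r : Proc Act} (hrp : Sim2 r p) (hrq : Sim2 r q) : Sim2 r (mlb (n + 1) p q) := by
  refine .of_step (fun a r' hr => ?_) (.of_step fun c g hg => ?_)
  · obtain ⟨p', hp, hrp'⟩ := hrp.exists_step hr
    obtain ⟨q', hq, hrq'⟩ := hrq.exists_step hr
    have hpq' : HasCommonLowerBound p' q' := ⟨r', hrp', hrq'⟩
    exact ⟨mlb n p' q', step_mlb_succ.mpr ⟨p', q', hp, hq, hpq', rfl⟩,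
      (ih a p' q' hp hq hpq').2.2 r' hrp' hrq'⟩
  · obtain ⟨p', q', hp, hq, hpq', rfl⟩ := step_mlb_succ.mp hg
    obtain ⟨r', hr, hpr'⟩ := hrp.sim_symm.exists_step hp
    exact ⟨r', hr, (ih c p' q' hp hq hpq').1.sim.trans hpr'⟩

theorem sim2_mlb_succ_left
    (ih : ∀ a p' q', Step p a p' → Step q a q' → HasCommonLowerBound p' q' →
      MaxLowerBound Sim2 (mlb n p' q') p' q')
    (hpq : HasCommonLowerBound p q) : Sim2 (mlb (n + 1) p q) p := by
  obtain ⟨r, hrp, hrq⟩ := hpq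
  refine .of_step (fun c g hg => ?_)
    (hrp.sim_symm.trans (sim2_mlb_succ_of_lowerBound ih hrp hrq).sim)
  obtain ⟨p', q', hp, hq, hpq', rfl⟩ := step_mlb_succ.mp hg
  exact ⟨p', hp, (ih c p' q' hp hq hpq').1⟩

theorem sim2_mlb_succ_right
    (ih : ∀ a p' q', Step p a p' → Step q a q' → HasCommonLowerBound p' q' →
      MaxLowerBound Sim2 (mlb n p' q') p' q')
    (hpq : HasCommonLowerBound p q) : Sim2 (mlb (n + 1) p q) q := by
  obtain ⟨r, hrp, hrq⟩ := hpq
  refine .of_step (fun c g hg => ?_)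
    (hrq.sim_symm.trans (sim2_mlb_succ_of_lowerBound ih hrp hrq).sim)
  obtain ⟨p', q', hp, hq, hpq', rfl⟩ := step_mlb_succ.mp hg
  exact ⟨q', hq, (ih c p' q' hp hq hpq').2.1⟩

theorem maxLowerBound_mlb (hn : p.depth < n) (hpq : HasCommonLowerBound p q) :
    MaxLowerBound Sim2 (mlb n p q) p q := by
  induction n generalizing p q with
  | zero => exact absurd hn (Nat.not_lt_zero _)
  | succ n ihn =>
    have ih : ∀ a p' q', Step p a p' → Step q a q' → HasCommonLowerBound p' q' →
        MaxLowerBound Sim2 (mlb n p' q') p' q' := fun _ _ _ hp _ hpq' =>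
      ihn (Nat.lt_of_lt_of_le hp.depth_lt (Nat.lt_succ_iff.mp hn)) hpq'
    exact ⟨sim2_mlb_succ_left ih hpq, sim2_mlb_succ_right ih hpq,
      fun _ => sim2_mlb_succ_of_lowerBound ih⟩

end Maximality

theorem mlb_sat_iff_common_lower_bound_general {Act : Type}
    (φ : HML Act) (h : InL2S φ) (p q : Proc Act) :
    (∃ g : Proc Act, MaxLowerBound Sim2 g p q ∧ Sat g φ) ↔
      (∃ r : Proc Act, Sat r φ ∧ Sim2 r p ∧ Sim2 r q) := by
  constructor
  · rintro ⟨g, ⟨hgp, hgq, -⟩, hg⟩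
    exact ⟨g, hg, hgp, hgq⟩
  · rintro ⟨r, hr, hrp, hrq⟩
    have hmlb := maxLowerBound_mlb (Nat.lt_succ_self p.depth) ⟨r, hrp, hrq⟩
    exact ⟨_, hmlb, h.sat_of_sim2 (hmlb.2.2 r hrp hrq) hr⟩

/-- Let `φ ∈ L_{2S}` and `p ⊨ φ`, `q ⊨ φ`. Then the following are equivalent:
(1) `p` and `q` have a maximal lower bound `g` w.r.t. `≲_{2S}` and `g ⊨ φ`;
(2) there is a process `r` with `r ⊨ φ`, `r ≲_{2S} p` and `r ≲_{2S} q`. -/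
theorem mlb_sat_iff_common_lower_bound {Act : Type} [Fintype Act] [Nonempty Act]
    (φ : HML Act) (h : InL2S φ) (p q : Proc Act) (hp : Sat p φ) (hq : Sat q φ) :
    (∃ g : Proc Act, MaxLowerBound Sim2 g p q ∧ Sat g φ) ↔
      (∃ r : Proc Act, Sat r φ ∧ Sim2 r p ∧ Sim2 r q) :=
  mlb_sat_iff_common_lower_bound_general φ h p q
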